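/- Let α = [0;1+d₁,d₂,d₃,…] be irrational with d₁ ≥ 1. Then the characteristic Sturmian word c_α admits the decomposition c_α = ∏_{j=−1}^{∞} (v_{2j} w_{2j+1})^{d_{2j+3}} = ∏_{j=−1}^{∞} v_j into (adjoining) singular words. -/

import Mathlib

/-- The two-letter alphabet 𝒜 = {a, b}. -/
inductive AB : Type
  | a : AB
  | b : AB
deriving DecidableEq, Repr

/-- Apply a morphism (determined by its images on the letters) to a finite word. -/
def applyM (g : AB → List AB) (w : List AB) : List AB := w.flatMap g

/-- The exchange morphism E : a ↦ b, b ↦ a. -/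
def Em : AB → List AB
  | AB.a => [AB.b]
  | AB.b => [AB.a]

/-- The morphism φ : a ↦ ab, b ↦ a. -/
def phim : AB → List AB
  | AB.a => [AB.a, AB.b]
  | AB.b => [AB.a]

/-- Composition of morphisms: `compM g h` applies `h` first, then `g`. -/
def compM (g h : AB → List AB) : AB → List AB := fun c => applyM g (h c)

/-- Powers of a morphism. -/
def mpow (g : AB → List AB) : ℕ → AB → List AB
  | 0 => fun c => [c]
  | n + 1 => compM g (mpow g n)

/-- A morphism is standard iff it is a composition of E and φ (in any number and order). -/
inductive IsStandard : (AB → List AB) → Prop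
  | id : IsStandard (fun c => [c])
  | compE {ψ : AB → List AB} : IsStandard ψ → IsStandard (compM ψ Em)
  | compPhi {ψ : AB → List AB} : IsStandard ψ → IsStandard (compM ψ phim)

/-- `IsRightConj ψ ξ k` : ξ is the k-th right conjugate of ψ, i.e. there is a word u
of length k with ψ(w)u = uξ(w) for all finite words w. -/
def IsRightConj (ψ ξ : AB → List AB) (k : ℕ) : Prop :=
  ∃ u : List AB, u.length = k ∧ ∀ w : List AB, applyM ψ w ++ u = u ++ applyM ξ w

/-- w^k (power of a finite word under concatenation). -/
def lpow (w : List AB) : ℕ → List AB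
  | 0 => []
  | k + 1 => w ++ lpow w k

/-- Standard sequence associated with a directive sequence (d₁, d₂, …) (here `d`
is indexed so that `d i` is dᵢ for i ≥ 1): `sseq d 0 = s₋₁ = b`, `sseq d (n+1) = sₙ`,
with s₀ = a and sₙ = sₙ₋₁^{dₙ} sₙ₋₂. -/
def sseq (d : ℕ → ℕ) : ℕ → List AB
  | 0 => [AB.b]
  | 1 => [AB.a]
  | n + 2 => lpow (sseq d (n + 1)) (d (n + 1)) ++ sseq d n

/-- Convergent denominators: `qseq d n` = qₙ = |sₙ| (q₀ = 1, q₁ = 1 + d₁,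
qₙ = dₙqₙ₋₁ + qₙ₋₂). -/
def qseq (d : ℕ → ℕ) : ℕ → ℕ
  | 0 => 1
  | 1 => 1 + d 1
  | n + 2 => d (n + 2) * qseq d (n + 1) + qseq d n

/-- `PrefInf u x` : the finite word u is a prefix of the infinite word x. -/
def PrefInf (u : List AB) (x : ℕ → AB) : Prop :=
  ∀ i, i < u.length → u.getD i AB.a = x i

/-- Image of an infinite word under a (non-erasing) morphism, letter by letter. -/
def applyInf (g : AB → List AB) (x : ℕ → AB) : ℕ → AB :=
  fun i => (applyM g ((List.range (i + 1)).map x)).getD i AB.a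

/-- `IsProdInf u x` : the infinite word x is the infinite product u 0 · u 1 · u 2 ⋯,
i.e. every finite partial product is a prefix of x. -/
def IsProdInf (u : ℕ → List AB) (x : ℕ → AB) : Prop :=
  ∀ n, PrefInf (((List.range n).map u).flatten) x

/-- Adjoining singular words: `vword d k` is the adjoining singular word v_{k-1}
(so `vword d 0 = v₋₁`), where vₙ = a·sₙ₊₁^{d_{n+2}−1}sₙ·b⁻¹ for n odd and
vₙ = b·sₙ₊₁^{d_{n+2}−1}sₙ·a⁻¹ for n even. -/
def vword (d : ℕ → ℕ) (k : ℕ) : List AB :=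
  (if k % 2 = 0 then AB.a else AB.b) ::
    (lpow (sseq d (k + 1)) (d (k + 1) - 1) ++ sseq d k).dropLast

/-- Singular words: `wword d k` is the singular word w_{k-2}
(w₋₂ = ε, w₋₁ = a, w₀ = b, and wₙ = a·sₙ·b⁻¹ for n ≥ 1 odd, wₙ = b·sₙ·a⁻¹ for n even). -/
def wword (d : ℕ → ℕ) : ℕ → List AB
  | 0 => []
  | 1 => [AB.a]
  | 2 => [AB.b]
  | k + 3 =>
      (if (k + 1) % 2 = 1 then AB.a else AB.b) :: (sseq d (k + 2)).dropLast

/-- The standard morphism σ associated with a type (i) Sturm number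
α = [0;1+d₁,\overline{d₂,…,dₙ}] : σ(a) = sₙ₋₁, σ(b) = sₙ₋₁^{dₙ−d₁} sₙ₋₂. -/
def sigmaGen (d : ℕ → ℕ) (n : ℕ) : AB → List AB
  | AB.a => sseq d n
  | AB.b => lpow (sseq d n) (d n - d 1) ++ sseq d (n - 1)

/-- The directive sequence of α = [0;2,\overline{r}] : d₁ = 1, dᵢ = r for i ≥ 2. -/
def dseq (r : ℕ) : ℕ → ℕ := fun i => if i ≤ 1 then 1 else r

/-- The directive sequence of 1 − α = [0;1,d₁,\overline{d₂,…,dₙ}] obtained from that of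
α = [0;1+d₁,\overline{d₂,…,dₙ}] : ê₁ = 0 and êᵢ = dᵢ₋₁ for i ≥ 2. -/
def dhat (d : ℕ → ℕ) : ℕ → ℕ := fun i => if i ≤ 1 then 0 else d (i - 1)

/-- `Generates ψ c x` : ψ is prolongable on the letter c and x = ψ^ω(c), i.e. every
ψ^m(c) is a prefix of x. -/
def Generates (ψ : AB → List AB) (c : AB) (x : ℕ → AB) : Prop :=
  (∃ w : List AB, w ≠ [] ∧ ψ c = c :: w) ∧ ∀ m, PrefInf (mpow ψ m c) x

/-- Fibonacci numbers, shifted: `fibw k = F_{k-1}`, so fibw 0 = F₋₁ = 1,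
fibw 1 = F₀ = 1, Fₙ = Fₙ₋₁ + Fₙ₋₂. -/
def fibw : ℕ → ℕ
  | 0 => 1
  | 1 => 1
  | n + 2 => fibw (n + 1) + fibw n

/-- `HasCF γ a` : γ has continued fraction expansion [0; a 1, a 2, a 3, …]. -/
def HasCF (γ : ℝ) (a : ℕ → ℕ) : Prop :=
  ∃ x : ℕ → ℝ, x 0 = γ ∧ (∀ i, 0 < x i ∧ x i < 1) ∧
    ∀ i, 1 / x i = (a (i + 1) : ℝ) + x (i + 1)

/-- γ has a continued fraction expansion of type (i):
γ = [0;1+d₁,\overline{d₂,…,dₙ}] < 1/2 with dₙ ≥ d₁ ≥ 1. -/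
def CFTypeI (γ : ℝ) : Prop :=
  ∃ a : ℕ → ℕ, HasCF γ a ∧ γ < 1 / 2 ∧
    ∃ n : ℕ, 2 ≤ n ∧ ∃ d : ℕ → ℕ,
      (∀ i, 1 ≤ i → 1 ≤ d i) ∧ a 1 = 1 + d 1 ∧ (∀ i, 2 ≤ i → a i = d i) ∧
      (∀ i, 2 ≤ i → d (i + (n - 1)) = d i) ∧ d 1 ≤ d n

/-- γ has a continued fraction expansion of type (ii):
γ = [0;1,d₁,\overline{d₂,…,dₙ}] > 1/2 with dₙ ≥ d₁. -/
def CFTypeII (γ : ℝ) : Prop :=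
  ∃ a : ℕ → ℕ, HasCF γ a ∧ 1 / 2 < γ ∧
    ∃ n : ℕ, 2 ≤ n ∧ ∃ d : ℕ → ℕ,
      (∀ i, 1 ≤ i → 1 ≤ d i) ∧ a 1 = 1 ∧ (∀ i, 2 ≤ i → a i = d (i - 1)) ∧
      (∀ i, 2 ≤ i → d (i + (n - 1)) = d i) ∧ d 1 ≤ d n

/-- A Sturm number: an irrational γ ∈ (0,1) whose continued fraction expansion is of
type (i) or type (ii). -/
def IsSturmNumber (γ : ℝ) : Prop :=
  Irrational γ ∧ 0 < γ ∧ γ < 1 ∧ (CFTypeI γ ∨ CFTypeII γ)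

/-! Writing `s⁻` for `s` with its last letter deleted, each adjoining singular word extends
`sₙ₊₁⁻` to `sₙ₊₂⁻`: the head letter of `vₙ` is the last letter of `sₙ₊₁`, and the rest is
`(sₙ₊₁^{dₙ₊₂−1} sₙ)⁻`. Hence `v₋₁ ⋯ vₙ = sₙ₊₂⁻`, and every partial product of the second
decomposition is a prefix of `c_α`. For the first one, the conjugation identity
`(xy)^{m+1} = x (yx)^m y` gives `(vₙ wₙ₊₁)^{dₙ₊₃} = vₙ vₙ₊₁`, so it is the second
decomposition with its factors grouped as `v₋₁ · (v₀ v₁) · (v₂ v₃) ⋯`. -/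

lemma lpow_eq_append_lpow_pred (w : List AB) {m : ℕ} (hm : 1 ≤ m) :
    lpow w m = w ++ lpow w (m - 1) := by
  obtain ⟨k, rfl⟩ := Nat.exists_eq_add_of_le' hm
  rfl

lemma lpow_append_succ (x y : List AB) :
    ∀ m, lpow (x ++ y) (m + 1) = x ++ lpow (y ++ x) m ++ y
  | 0 => by simp [lpow]
  | m + 1 => by
    change x ++ y ++ lpow (x ++ y) (m + 1) = _
    rw [lpow_append_succ x y m]
    simp [lpow]

lemma PrefInf.of_isPrefix {u v : List AB} {x : ℕ → AB} (huv : u <+: v) (hv : PrefInf v x) :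
    PrefInf u x := by
  intro i hi
  rw [← hv i (lt_of_lt_of_le hi huv.length_le), List.getD_eq_getElem _ _ hi,
    List.getD_eq_getElem _ _ (lt_of_lt_of_le hi huv.length_le), huv.getElem hi]

def lastLetter (k : ℕ) : AB := if k % 2 = 0 then AB.b else AB.a

@[simp]
lemma lastLetter_add_two (k : ℕ) : lastLetter (k + 2) = lastLetter k := by
  simp [lastLetter, Nat.add_mod_right]

lemma sseq_ne_nil (d : ℕ → ℕ) : ∀ k, sseq d k ≠ []
  | 0 | 1 => List.cons_ne_nil _ _
  | k + 2 => List.append_ne_nil_of_right_ne_nil _ (sseq_ne_nil d k)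

lemma sseq_dropLast_append_lastLetter (d : ℕ → ℕ) :
    ∀ k, (sseq d k).dropLast ++ [lastLetter k] = sseq d k
  | 0 | 1 => rfl
  | k + 2 => by
    change (lpow _ _ ++ sseq d k).dropLast ++ _ = lpow _ _ ++ sseq d k
    conv_rhs => rw [← sseq_dropLast_append_lastLetter d k]
    simp [sseq_ne_nil]

section StandardWords

variable {d : ℕ → ℕ}

lemma dropLast_append_sseq_append_cons (x y : List AB) (k : ℕ) :
    (x ++ sseq d k).dropLast ++ lastLetter k :: y = x ++ sseq d k ++ y := by
  conv_rhs => rw [← sseq_dropLast_append_lastLetter d k]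
  simp [List.dropLast_append_of_ne_nil (sseq_ne_nil d k)]

lemma sseq_add_two_of_pos {n : ℕ} (hn : 1 ≤ d (n + 1)) :
    sseq d (n + 2) = sseq d (n + 1) ++ lpow (sseq d (n + 1)) (d (n + 1) - 1) ++ sseq d n := by
  change lpow _ _ ++ _ = _
  rw [lpow_eq_append_lpow_pred _ hn]

lemma vword_eq_cons (n : ℕ) :
    vword d n = lastLetter (n + 1) ::
      (lpow (sseq d (n + 1)) (d (n + 1) - 1) ++ sseq d n).dropLast := by
  have : (if n % 2 = 0 then AB.a else AB.b) = lastLetter (n + 1) := by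
    unfold lastLetter
    rcases Nat.mod_two_eq_zero_or_one n with h | h <;> simp [h, Nat.succ_mod_two_eq_zero_iff]
  rw [vword, this]

lemma wword_add_three (k : ℕ) :
    wword d (k + 3) = lastLetter (k + 1) :: (sseq d (k + 2)).dropLast := by
  have : (if (k + 1) % 2 = 1 then AB.a else AB.b) = lastLetter (k + 1) := by
    unfold lastLetter
    rcases Nat.mod_two_eq_zero_or_one (k + 1) with h | h <;> simp [h]
  rw [wword, this]

lemma vword_zero (hd : 1 ≤ d 1) : vword d 0 = lpow [AB.a] (d 1) := by
  rw [vword_eq_cons, lpow_eq_append_lpow_pred _ hd]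
  simp [sseq, lastLetter]

lemma dropLast_sseq_append_vword (n : ℕ) (hn : 1 ≤ d (n + 1)) :
    (sseq d (n + 1)).dropLast ++ vword d n = (sseq d (n + 2)).dropLast := by
  rw [vword_eq_cons, ← List.nil_append (sseq d (n + 1)), dropLast_append_sseq_append_cons,
    List.nil_append, sseq_add_two_of_pos hn]
  simp [sseq_ne_nil]

lemma flatten_map_vword_range (hd : ∀ i, 1 ≤ i → 1 ≤ d i) (n : ℕ) :
    ((List.range n).map (vword d)).flatten = (sseq d (n + 1)).dropLast := by
  induction n with
  | zero => rfl
  | succ n ih =>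
    rw [List.range_succ, List.map_append, List.flatten_append, ih]
    simpa using dropLast_sseq_append_vword n (hd (n + 1) (by omega))

lemma lpow_vword_append_wword (hd : ∀ i, 1 ≤ i → 1 ≤ d i) (k : ℕ) :
    lpow (vword d (k + 1) ++ wword d (k + 3)) (d (k + 3))
      = vword d (k + 1) ++ vword d (k + 2) := by
  have hv₁ : vword d (k + 1) = lastLetter (k + 2) ::
      (lpow (sseq d (k + 2)) (d (k + 2) - 1) ++ sseq d (k + 1)).dropLast := vword_eq_cons (k + 1)
  have hv₂ : vword d (k + 2) = lastLetter (k + 1) ::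
      (lpow (sseq d (k + 3)) (d (k + 3) - 1) ++ sseq d (k + 2)).dropLast := by
    rw [vword_eq_cons, lastLetter_add_two]
  set x := lastLetter (k + 2) :: (lpow (sseq d (k + 2)) (d (k + 2) - 1) ++ sseq d (k + 1))
  have hvw : vword d (k + 1) ++ wword d (k + 3) = x ++ (sseq d (k + 2)).dropLast := by
    rw [hv₁, wword_add_three, List.cons_append, dropLast_append_sseq_append_cons]
    rfl
  have hyx : (sseq d (k + 2)).dropLast ++ x = sseq d (k + 3) := by
    rw [← List.nil_append (sseq d (k + 2)), dropLast_append_sseq_append_cons,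
      sseq_add_two_of_pos (hd (k + 2) (by omega))]
    simp
  rw [hvw, ← Nat.sub_add_cancel (hd (k + 3) (by omega)), lpow_append_succ, hyx, hv₁, hv₂]
  simp only [x, List.cons_append, dropLast_append_sseq_append_cons,
    List.dropLast_append_of_ne_nil (sseq_ne_nil d (k + 2)), List.append_assoc]

lemma flatten_map_range_grouped (hd : ∀ i, 1 ≤ i → 1 ≤ d i) (n : ℕ) :
    ((List.range n).map fun i =>
        lpow ((if i = 0 then [] else vword d (2 * i - 1)) ++ wword d (2 * i + 1))
          (d (2 * i + 1))).flatten
      = ((List.range (2 * n - 1)).map (vword d)).flatten := by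
  induction n with
  | zero => rfl
  | succ n ih =>
    rcases n with _ | n
    · simp [vword_zero (hd 1 le_rfl), wword]
    · rw [List.range_succ, List.map_append, List.flatten_append, ih,
        show 2 * (n + 1 + 1) - 1 = 2 * n + 1 + 1 + 1 by omega,
        List.range_succ, List.range_succ, show 2 * (n + 1) - 1 = 2 * n + 1 by omega]
      simpa [show 2 * (n + 1) - 1 = 2 * n + 1 by omega,
        show 2 * (n + 1) + 1 = 2 * n + 3 by omega] using lpow_vword_append_wword hd (2 * n)

lemma prefInf_dropLast_sseq {c : ℕ → AB} (hc : ∀ k, PrefInf (sseq d (k + 1)) c) :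
    ∀ k, PrefInf (sseq d k).dropLast c
  | 0 => fun _ hi => absurd hi (by simp [sseq])
  | k + 1 => (hc k).of_isPrefix (List.dropLast_prefix _)

end StandardWords

/-- For α = [0;1+d₁,d₂,d₃,…] irrational with d₁ ≥ 1,
c_α = ∏_{j=−1}^∞ (v_{2j} w_{2j+1})^{d_{2j+3}} = ∏_{j=−1}^∞ v_j.
(Term i of the first product corresponds to j = i − 1, with v_{2j} = v_{2i−2} =
`vword d (2i−1)` for i ≥ 1 and v₋₂ = ε for i = 0, w_{2j+1} = w_{2i−1} =
`wword d (2i+1)`, and d_{2j+3} = d (2i+1); term i of the second product is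
v_{i−1} = `vword d i`.) -/
theorem statement15 (d : ℕ → ℕ) (hd : ∀ i, 1 ≤ i → 1 ≤ d i)
    (c : ℕ → AB) (hc : ∀ k, PrefInf (sseq d (k + 1)) c) :
    IsProdInf
      (fun i =>
        lpow ((if i = 0 then [] else vword d (2 * i - 1)) ++ wword d (2 * i + 1))
          (d (2 * i + 1)))
      c ∧
    IsProdInf (fun i => vword d i) c := by
  have hv : IsProdInf (fun i => vword d i) c := fun n => by
    rw [flatten_map_vword_range hd]
    exact prefInf_dropLast_sseq hc _
  refine ⟨fun n => ?_, hv⟩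
  rw [flatten_map_range_grouped hd]
  exact hv _
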